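/- arXiv:2602.16414 — 4 statements merged into one kernel-verified Lean document; each statement's English description precedes it below -/
import Mathlib

section
/- Y° is cut out in the torus by the homogenized equations: Y° = {y ∈ (ℂˣ)ⁿ : f₁ʰ(y) = 1, …, f_kʰ(y) = 1}. -/
/-!
Since `M` is unimodular, `φ_{(M⁻¹)ᵗ}` is an automorphism of the torus with inverse `φ_{Mᵗ}`,
so `y ∈ Y°` iff `x = φ_{Mᵗ}(y)` lies on the graph `Γ(D)`, i.e. `x_{d+i} · fᵢ(x₁, …, x_d) = 1`.
The first `d` coordinates of `φ_{Mᵗ}(y)` are `∏ⱼ yⱼ ^ uⱼ` and the last `k` are `∏ⱼ yⱼ ^ aᵢⱼ`,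
and `fᵢʰ(y) = fᵢ(∏ⱼ yⱼ ^ uⱼ) · ∏ⱼ yⱼ ^ aᵢⱼ` on the torus, which turns the graph equations into
`fᵢʰ(y) = 1`.
-/

noncomputable section

open Finset Matrix

/-- Evaluation of the Laurent monomial `t ^ m` with integer exponent vector `m`. -/
def lmon {d : ℕ} (t : Fin d → ℂ) (m : Fin d → ℤ) : ℂ := ∏ j, t j ^ m j

/-- Evaluation of the Laurent polynomial with support `S` and coefficients `c` at `t`. -/
def leval {d : ℕ} (S : Finset (Fin d → ℤ)) (c : (Fin d → ℤ) → ℂ) (t : Fin d → ℂ) : ℂ :=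
  ∑ m ∈ S, c m * lmon t m

/-- The monomial map `φ_B` whose `j`-th coordinate is `t ^ bⱼ`, `bⱼ` the `j`-th column
of the integer matrix `B`. -/
def monMap {p q : ℕ} (B : Matrix (Fin p) (Fin q) ℤ) (t : Fin p → ℂ) : Fin q → ℂ :=
  fun j => ∏ i, t i ^ B i j

/-- Evaluation at `y ∈ ℂ^{d+k}` of the homogenization
`fʰ(y) = Σ_{m ∈ S} c m ∏ⱼ yⱼ ^ (⟨uⱼ, m⟩ + aⱼ)` of the Laurent polynomial with support `S`
and coefficients `c`, with respect to the facet normals `u` and offsets `a`. -/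
def homogEval {d n : ℕ} (S : Finset (Fin d → ℤ)) (c : (Fin d → ℤ) → ℂ)
    (u : Fin n → Fin d → ℤ) (a : Fin n → ℤ) (y : Fin n → ℂ) : ℂ :=
  ∑ m ∈ S, c m * ∏ j, y j ^ ((∑ l, u j l * m l) + a j).toNat

lemma zpow_sum₀ {G₀ ι : Type*} [CommGroupWithZero G₀] {x : G₀} (hx : x ≠ 0) (s : Finset ι) (f : ι → ℤ) :
    x ^ (∑ i ∈ s, f i) = ∏ i ∈ s, x ^ f i := by
  classical
  induction s using Finset.induction with
  | empty => simp
  | insert _ _ h ih => rw [sum_insert h, prod_insert h, zpow_add₀ hx, ih]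

lemma lmon_prod_zpow {d n : ℕ} {y : Fin n → ℂ} (hy : ∀ j, y j ≠ 0) (u : Fin n → Fin d → ℤ)
    (m : Fin d → ℤ) :
    lmon (fun l => ∏ j, y j ^ u j l) m = ∏ j, y j ^ ∑ l, u j l * m l := by
  calc lmon (fun l => ∏ j, y j ^ u j l) m
      = ∏ l, ∏ j, y j ^ (u j l * m l) := by
        simp only [lmon, ← prod_zpow, _root_.zpow_mul]
    _ = ∏ j, ∏ l, y j ^ (u j l * m l) := prod_comm
    _ = ∏ j, y j ^ ∑ l, u j l * m l := prod_congr rfl fun j _ => (zpow_sum₀ (hy j) _ _).symm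

lemma homogEval_eq_leval_mul {d n : ℕ} (S : Finset (Fin d → ℤ)) (c : (Fin d → ℤ) → ℂ)
    (u : Fin n → Fin d → ℤ) (a : Fin n → ℤ) {y : Fin n → ℂ} (hy : ∀ j, y j ≠ 0)
    (ha : ∀ j, ∀ m ∈ S, 0 ≤ (∑ l, u j l * m l) + a j) :
    homogEval S c u a y = leval S c (fun l => ∏ j, y j ^ u j l) * ∏ j, y j ^ a j := by
  rw [leval, homogEval, sum_mul]
  refine sum_congr rfl fun m hm => ?_
  rw [mul_assoc, lmon_prod_zpow hy, ← prod_mul_distrib]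
  congr 1
  refine prod_congr rfl fun j _ => ?_
  rw [← zpow_natCast, Int.toNat_of_nonneg (ha j m hm), zpow_add₀ (hy j)]

lemma monMap_ne_zero {p q : ℕ} (B : Matrix (Fin p) (Fin q) ℤ) {t : Fin p → ℂ}
    (ht : ∀ i, t i ≠ 0) (j : Fin q) : monMap B t j ≠ 0 :=
  prod_ne_zero_iff.2 fun i _ => zpow_ne_zero _ (ht i)

lemma monMap_monMap {p q r : ℕ} (A : Matrix (Fin q) (Fin r) ℤ) (B : Matrix (Fin p) (Fin q) ℤ)
    {t : Fin p → ℂ} (ht : ∀ i, t i ≠ 0) :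
    monMap A (monMap B t) = monMap (B * A) t := by
  funext j
  calc ∏ i, (∏ l, t l ^ B l i) ^ A i j
      = ∏ l, ∏ i, t l ^ (B l i * A i j) := by
        simp only [← prod_zpow, ← _root_.zpow_mul]
        exact prod_comm
    _ = ∏ l, t l ^ (B * A) l j :=
        prod_congr rfl fun l _ => by rw [mul_apply, zpow_sum₀ (ht l)]

lemma monMap_one {p : ℕ} (t : Fin p → ℂ) : monMap 1 t = t := by
  funext j
  rw [monMap, prod_eq_single j (fun i _ hi => by rw [one_apply_ne hi, zpow_zero]) (by simp),
    one_apply_eq, zpow_one]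

lemma image_monMap_of_mul_eq_one {p : ℕ} {B C : Matrix (Fin p) (Fin p) ℤ} (hBC : B * C = 1)
    {T : Set (Fin p → ℂ)} (hT : ∀ x ∈ T, ∀ i, x i ≠ 0) :
    monMap C '' T = {y | (∀ j, y j ≠ 0) ∧ monMap B y ∈ T} := by
  ext y
  constructor
  · rintro ⟨x, hx, rfl⟩
    refine ⟨monMap_ne_zero C (hT x hx), ?_⟩
    rwa [monMap_monMap _ _ (hT x hx), mul_eq_one_comm.1 hBC, monMap_one]
  · rintro ⟨hy, hyT⟩
    exact ⟨monMap B y, hyT, by rw [monMap_monMap _ _ hy, hBC, monMap_one]⟩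

lemma image_graph_inv {d k : ℕ} (g : (Fin d → ℂ) → Fin k → ℂ) :
    (fun t => Fin.append t fun i => (g t i)⁻¹) '' {t | (∀ j, t j ≠ 0) ∧ ∀ i, g t i ≠ 0} =
      {x | (∀ j, x j ≠ 0) ∧
        ∀ i, g (fun l => x (Fin.castAdd k l)) i * x (Fin.natAdd d i) = 1} := by
  ext x
  constructor
  · rintro ⟨t, ⟨ht, hg⟩, rfl⟩
    refine ⟨Fin.addCases (by simpa using ht) (by simpa using hg), fun i => ?_⟩
    simp [hg i]
  · rintro ⟨hx, hg⟩
    refine ⟨fun l => x (Fin.castAdd k l),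
      ⟨fun l => hx _, fun i => left_ne_zero_of_mul_eq_one (hg i)⟩, ?_⟩
    conv_rhs => rw [← Fin.append_castAdd_natAdd (f := x)]
    simp only [← eq_inv_of_mul_eq_one_right (hg _)]

theorem statement1_general
    (d k : ℕ)
    -- the Laurent polynomials `f i` with nonempty support `S i` and nonzero coefficients
    (S : Fin k → Finset (Fin d → ℤ))
    (c : Fin k → (Fin d → ℤ) → ℂ)
    -- the columns `u j` of `F` and the vectors `a i` with `a i j = -min_{m ∈ S i} ⟨u j, m⟩`
    (u : Fin (d + k) → Fin d → ℤ)
    (a : Fin k → Fin (d + k) → ℤ)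
    (ha_le : ∀ i j, ∀ m ∈ S i, 0 ≤ (∑ l, u j l * m l) + a i j)
    -- the unimodular matrix `M` whose first `d` rows are `F` and last `k` rows are the `a i`
    (M : Matrix (Fin (d + k)) (Fin (d + k)) ℤ)
    (hMF : ∀ (i : Fin d) (j : Fin (d + k)), M (Fin.castAdd k i) j = u j i)
    (hMA : ∀ (i : Fin k) (j : Fin (d + k)), M (Fin.natAdd d i) j = a i j)
    (hMdet : M.det = 1 ∨ M.det = -1)
    -- the domain `D = {t ∈ (ℂ*)^d : f i (t) ≠ 0 for all i}`
    (D : Set (Fin d → ℂ))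
    (hD : D = {t | (∀ j, t j ≠ 0) ∧ ∀ i, leval (S i) (c i) t ≠ 0})
    -- the graph map `Γ` and the parametrization `φ = φ_{(M⁻¹)ᵗ} ∘ Γ`
    (Γ : (Fin d → ℂ) → Fin (d + k) → ℂ)
    (hΓ : ∀ t, Γ t = Fin.append t (fun i => (leval (S i) (c i) t)⁻¹))
    (φ : (Fin d → ℂ) → Fin (d + k) → ℂ)
    (hφ : ∀ t, φ t = monMap (M⁻¹)ᵀ (Γ t)) :
    φ '' D =
      {y : Fin (d + k) → ℂ |
        (∀ j, y j ≠ 0) ∧ ∀ i, homogEval (S i) (c i) u (a i) y = 1} := by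
  have hdet : IsUnit M.det := by rcases hMdet with h | h <;> simp [h]
  have hMM : Mᵀ * (M⁻¹)ᵀ = 1 := by rw [← transpose_mul, nonsing_inv_mul M hdet, transpose_one]
  have hF (y : Fin (d + k) → ℂ) (l : Fin d) :
      monMap Mᵀ y (Fin.castAdd k l) = ∏ j, y j ^ u j l := by simp [monMap, hMF]
  have hA (y : Fin (d + k) → ℂ) (i : Fin k) :
      monMap Mᵀ y (Fin.natAdd d i) = ∏ j, y j ^ a i j := by simp [monMap, hMA]
  rw [show φ = monMap (M⁻¹)ᵀ ∘ Γ from funext hφ, Set.image_comp, show Γ = _ from funext hΓ, hD,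
    image_graph_inv (fun t i => leval (S i) (c i) t),
    image_monMap_of_mul_eq_one hMM fun x hx => hx.1]
  ext y
  simp only [Set.mem_ofPred_eq, hF, hA]
  refine and_congr_right fun hy => ?_
  rw [and_iff_right (monMap_ne_zero _ hy)]
  exact forall_congr' fun i => by rw [homogEval_eq_leval_mul _ _ _ _ hy (ha_le i)]

theorem statement1
    (d k : ℕ) (hd : 1 ≤ d) (hk : 1 ≤ k)
    -- the Laurent polynomials `f i` with nonempty support `S i` and nonzero coefficients
    (S : Fin k → Finset (Fin d → ℤ)) (hS : ∀ i, (S i).Nonempty)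
    (c : Fin k → (Fin d → ℤ) → ℂ) (hc : ∀ i, ∀ m ∈ S i, c i m ≠ 0)
    -- the columns `u j` of `F` and the vectors `a i` with `a i j = -min_{m ∈ S i} ⟨u j, m⟩`
    (u : Fin (d + k) → Fin d → ℤ)
    (a : Fin k → Fin (d + k) → ℤ)
    (ha_le : ∀ i j, ∀ m ∈ S i, 0 ≤ (∑ l, u j l * m l) + a i j)
    (ha_min : ∀ i j, ∃ m ∈ S i, (∑ l, u j l * m l) + a i j = 0)
    -- the unimodular matrix `M` whose first `d` rows are `F` and last `k` rows are the `a i`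
    (M : Matrix (Fin (d + k)) (Fin (d + k)) ℤ)
    (hMF : ∀ (i : Fin d) (j : Fin (d + k)), M (Fin.castAdd k i) j = u j i)
    (hMA : ∀ (i : Fin k) (j : Fin (d + k)), M (Fin.natAdd d i) j = a i j)
    (hMdet : M.det = 1 ∨ M.det = -1)
    -- the domain `D = {t ∈ (ℂ*)^d : f i (t) ≠ 0 for all i}`
    (D : Set (Fin d → ℂ))
    (hD : D = {t | (∀ j, t j ≠ 0) ∧ ∀ i, leval (S i) (c i) t ≠ 0})
    -- the graph map `Γ` and the parametrization `φ = φ_{(M⁻¹)ᵗ} ∘ Γ`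
    (Γ : (Fin d → ℂ) → Fin (d + k) → ℂ)
    (hΓ : ∀ t, Γ t = Fin.append t (fun i => (leval (S i) (c i) t)⁻¹))
    (φ : (Fin d → ℂ) → Fin (d + k) → ℂ)
    (hφ : ∀ t, φ t = monMap (M⁻¹)ᵀ (Γ t)) :
    φ '' D =
      {y : Fin (d + k) → ℂ |
        (∀ j, y j ≠ 0) ∧ ∀ i, homogEval (S i) (c i) u (a i) y = 1} :=
  statement1_general d k S c u a ha_le M hMF hMA hMdet D hD Γ hΓ φ hφ

end
end

section
/- If y* ∈ ℂⁿ satisfies f_iʰ(y*) = 1 for all i = 1,…,k, then there exists an extreme point (vertex) v of P such that y*_j ≠ 0 for every index j with ⟨u_j, v⟩ + a_j > 0, where a = a₁ + ⋯ + a_k ∈ ℤⁿ. (In the language of the Cox construction this says that the affine variety cut out by f₁ʰ − 1, …, f_kʰ − 1 does not meet the base locus Z(Σ_P); in particular the positive chart Y does not intersect Z(Σ_P).) -/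
noncomputable section

open Finset Matrix

/-- The real polyhedron `{m ∈ ℝᵈ : ⟨u_j, m⟩ + A_j ≥ 0 for all j}`. -/
def polyhedron {d n : ℕ} (u : Fin n → Fin d → ℤ) (A : Fin n → ℤ) : Set (Fin d → ℝ) :=
  {m | ∀ j, 0 ≤ (∑ l, (u j l : ℝ) * m l) + (A j : ℝ)}

/-- The real points of an integer lattice vector. -/
def toReal {d : ℕ} (m : Fin d → ℤ) : Fin d → ℝ := fun l => (m l : ℝ)

/-- The Minkowski sum `P₁ + ⋯ + P_k` of the Newton polytopes `P_i = conv(S_i)`. -/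
def minkowskiSum {d k : ℕ} (S : Fin k → Finset (Fin d → ℤ)) : Set (Fin d → ℝ) :=
  {x | ∃ g : Fin k → Fin d → ℝ,
        (∀ i, g i ∈ convexHull ℝ (toReal '' (S i : Set (Fin d → ℤ)))) ∧ x = ∑ i, g i}

/-! A monomial of `fʰ` survives at `y` only if every `yⱼ` that vanishes occurs in it to the
power zero; as `fᵢʰ(y) = 1`, each `fᵢʰ` has such a monomial `mᵢ`. The lattice point `Σ mᵢ`
lies in `P = P₁ + ⋯ + P_k` and on every facet `{⟨uⱼ, ·⟩ + aⱼ = 0}` with `yⱼ = 0`. These facets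
cut out a nonempty face of the polytope `P`, and any vertex of that face is the required vertex
of `P`. -/

lemma exists_mem_forall_exponent_eq_zero_of_homogEval_ne_zero {d n : ℕ}
    {S : Finset (Fin d → ℤ)} {c : (Fin d → ℤ) → ℂ} {u : Fin n → Fin d → ℤ} {a : Fin n → ℤ}
    {y : Fin n → ℂ} (hy : homogEval S c u a y ≠ 0)
    (ha : ∀ j, ∀ m ∈ S, 0 ≤ (∑ l, u j l * m l) + a j) :
    ∃ m ∈ S, ∀ j, y j = 0 → (∑ l, u j l * m l) + a j = 0 := by
  contrapose! hy
  refine Finset.sum_eq_zero fun m hm => ?_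
  obtain ⟨j, hyj, hexp⟩ := hy m hm
  have hpos : 0 < ((∑ l, u j l * m l) + a j).toNat := by have := ha j m hm; omega
  rw [Finset.prod_eq_zero (Finset.mem_univ j) (by rw [hyj, zero_pow hpos.ne']), mul_zero]

lemma isCompact_minkowskiSum {d k : ℕ} (S : Fin k → Finset (Fin d → ℤ)) :
    IsCompact (minkowskiSum S) := by
  have himage : minkowskiSum S = (fun g : Fin k → Fin d → ℝ => ∑ i, g i) ''
      Set.univ.pi fun i => convexHull ℝ (toReal '' (S i : Set (Fin d → ℤ))) := by
    ext x
    constructor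
    · rintro ⟨g, hg, rfl⟩
      exact ⟨g, fun i _ => hg i, rfl⟩
    · rintro ⟨g, hg, rfl⟩
      exact ⟨g, fun i => hg i (Set.mem_univ i), rfl⟩
  rw [himage]
  have hhulls : ∀ i, IsCompact (convexHull ℝ (toReal '' (S i : Set (Fin d → ℤ)))) :=
    fun i => ((S i).finite_toSet.image toReal).isCompact_convexHull (𝕜 := ℝ)
  exact (isCompact_univ_pi hhulls).image (continuous_finsetSum _ fun i _ => continuous_apply i)

lemma toReal_sum_mem_minkowskiSum {d k : ℕ} {S : Fin k → Finset (Fin d → ℤ)}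
    {m : Fin k → Fin d → ℤ} (hm : ∀ i, m i ∈ S i) : toReal (∑ i, m i) ∈ minkowskiSum S :=
  ⟨fun i => toReal (m i), fun i => subset_convexHull ℝ _ ⟨m i, hm i, rfl⟩,
    by ext l; simp [toReal]⟩

lemma isExtreme_sep_forall_eq_zero {E ι : Type*} [AddCommGroup E] [Module ℝ E] {s : Set E}
    (f : ι → E →ᵃ[ℝ] ℝ) (J : Set ι) (hf : ∀ j ∈ J, ∀ x ∈ s, 0 ≤ f j x) :
    IsExtreme ℝ s {x ∈ s | ∀ j ∈ J, f j x = 0} := by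
  refine ⟨Set.sep_subset _ _, fun x₁ hx₁ x₂ hx₂ x hx hseg => ⟨hx₁, fun j hj => ?_⟩⟩
  obtain ⟨p, q, hp, hq, hpq, rfl⟩ := hseg
  have hcombo := hx.2 j hj
  rw [Convex.combo_affine_apply hpq, smul_eq_mul, smul_eq_mul] at hcombo
  have h₁ := hf j hj x₁ hx₁
  have h₂ := hf j hj x₂ hx₂
  nlinarith

def facetForm {d n : ℕ} (u : Fin n → Fin d → ℤ) (A : Fin n → ℤ) (j : Fin n) :
    (Fin d → ℝ) →ᵃ[ℝ] ℝ where
  toFun x := (∑ l, (u j l : ℝ) * x l) + (A j : ℝ)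
  linear := ∑ l, (u j l : ℝ) • LinearMap.proj l
  map_vadd' x v := by
    simp only [Pi.vadd_apply', vadd_eq_add, mul_add, Finset.sum_add_distrib, LinearMap.coe_sum,
      LinearMap.coe_smul, LinearMap.coe_proj, Finset.sum_apply, Pi.smul_apply, Function.eval,
      smul_eq_mul]
    ring

lemma facetForm_toReal_sum {d n k : ℕ} (u : Fin n → Fin d → ℤ) (a : Fin k → Fin n → ℤ)
    (m : Fin k → Fin d → ℤ) (j : Fin n) :
    facetForm u (∑ i, a i) j (toReal (∑ i, m i))
      = ∑ i, (((∑ l, u j l * m i l) + a i j : ℤ) : ℝ) := by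
  simp only [facetForm, AffineMap.coe_mk, toReal, Finset.sum_apply]
  push_cast
  simp only [Finset.mul_sum, Finset.sum_add_distrib]
  rw [Finset.sum_comm]

theorem statement2_general
    (d k : ℕ)
    -- the Laurent polynomials `f i` with nonempty support `S i` and nonzero coefficients
    (S : Fin k → Finset (Fin d → ℤ))
    (c : Fin k → (Fin d → ℤ) → ℂ)
    -- the columns `u j` of `F` and the vectors `a i` with `a i j = -min_{m ∈ S i} ⟨u j, m⟩`
    (u : Fin (d + k) → Fin d → ℤ)
    (a : Fin k → Fin (d + k) → ℤ)
    (ha_le : ∀ i j, ∀ m ∈ S i, 0 ≤ (∑ l, u j l * m l) + a i j)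
    -- the total offset vector `a = a₁ + ⋯ + a_k`
    (A : Fin (d + k) → ℤ) (hA : ∀ j, A j = ∑ i, a i j)
    -- Assumption 3.1: the Minkowski sum `P = P₁ + ⋯ + P_k` equals the polyhedron
    -- `{m : Fᵗm + a ≥ 0}` …
    (hP : minkowskiSum S = polyhedron u A) :
    -- conclusion: the variety `{f₁ʰ = ⋯ = f_kʰ = 1}` avoids the base locus `Z(Σ_P)`
    ∀ y : Fin (d + k) → ℂ,
      (∀ i, homogEval (S i) (c i) u (a i) y = 1) →
      ∃ v ∈ Set.extremePoints ℝ (polyhedron u A),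
        ∀ j, 0 < (∑ l, (u j l : ℝ) * v l) + (A j : ℝ) → y j ≠ 0 := by
  intro y hy
  obtain rfl : A = ∑ i, a i := funext fun j => (hA j).trans (Finset.sum_apply j _ _).symm
  choose m hmS hm0 using fun i =>
    exists_mem_forall_exponent_eq_zero_of_homogEval_ne_zero (ne_of_eq_of_ne (hy i) one_ne_zero)
      (ha_le i)
  set Q := {x ∈ polyhedron u (∑ i, a i) | ∀ j ∈ {j | y j = 0}, facetForm u (∑ i, a i) j x = 0}
  have hmQ : toReal (∑ i, m i) ∈ Q := by
    refine ⟨hP ▸ toReal_sum_mem_minkowskiSum hmS, fun j hj => ?_⟩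
    rw [facetForm_toReal_sum]
    exact Finset.sum_eq_zero fun i _ => by rw [hm0 i j hj, Int.cast_zero]
  have hQ : IsCompact Q := by
    refine (hP ▸ isCompact_minkowskiSum S).inter_right
      (t := {x | ∀ j ∈ {j | y j = 0}, facetForm u (∑ i, a i) j x = 0}) ?_
    simp only [Set.ofPred_forall]
    exact isClosed_iInter fun j => isClosed_iInter fun _ =>
      isClosed_eq (facetForm u _ j).continuous_of_finiteDimensional continuous_const
  obtain ⟨v, hv⟩ := hQ.extremePoints_nonempty ⟨_, hmQ⟩
  have hface : IsExtreme ℝ (polyhedron u (∑ i, a i)) Q :=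
    isExtreme_sep_forall_eq_zero _ _ fun j _ x hx => hx j
  exact ⟨v, hface.extremePoints_subset_extremePoints hv,
    fun j hpos hyj => hpos.ne' (hv.1.2 j hyj)⟩

theorem statement2
    (d k : ℕ) (hd : 1 ≤ d) (hk : 1 ≤ k)
    -- the Laurent polynomials `f i` with nonempty support `S i` and nonzero coefficients
    (S : Fin k → Finset (Fin d → ℤ)) (hS : ∀ i, (S i).Nonempty)
    (c : Fin k → (Fin d → ℤ) → ℂ) (hc : ∀ i, ∀ m ∈ S i, c i m ≠ 0)
    -- the columns `u j` of `F` and the vectors `a i` with `a i j = -min_{m ∈ S i} ⟨u j, m⟩`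
    (u : Fin (d + k) → Fin d → ℤ)
    (a : Fin k → Fin (d + k) → ℤ)
    (ha_le : ∀ i j, ∀ m ∈ S i, 0 ≤ (∑ l, u j l * m l) + a i j)
    (ha_min : ∀ i j, ∃ m ∈ S i, (∑ l, u j l * m l) + a i j = 0)
    -- the unimodular matrix `M` whose first `d` rows are `F` and last `k` rows are the `a i`
    (M : Matrix (Fin (d + k)) (Fin (d + k)) ℤ)
    (hMF : ∀ (i : Fin d) (j : Fin (d + k)), M (Fin.castAdd k i) j = u j i)
    (hMA : ∀ (i : Fin k) (j : Fin (d + k)), M (Fin.natAdd d i) j = a i j)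
    (hMdet : M.det = 1 ∨ M.det = -1)
    -- the total offset vector `a = a₁ + ⋯ + a_k`
    (A : Fin (d + k) → ℤ) (hA : ∀ j, A j = ∑ i, a i j)
    -- Assumption 3.1: the Minkowski sum `P = P₁ + ⋯ + P_k` equals the polyhedron
    -- `{m : Fᵗm + a ≥ 0}` …
    (hP : minkowskiSum S = polyhedron u A)
    -- … `P` is `d`-dimensional …
    (hPdim : affineSpan ℝ (polyhedron u A) = ⊤)
    -- … the `u_j` are primitive …
    (hprim : ∀ j, Finset.univ.gcd (u j) = 1)
    -- … and each of the `n = d + k` inequalities defines a facet of `P`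
    (hfacet : ∀ j, ∃ x ∈ polyhedron u A,
        (∑ l, (u j l : ℝ) * x l) + (A j : ℝ) = 0 ∧
        ∀ j', j' ≠ j → 0 < (∑ l, (u j' l : ℝ) * x l) + (A j' : ℝ)) :
    -- conclusion: the variety `{f₁ʰ = ⋯ = f_kʰ = 1}` avoids the base locus `Z(Σ_P)`
    ∀ y : Fin (d + k) → ℂ,
      (∀ i, homogEval (S i) (c i) u (a i) y = 1) →
      ∃ v ∈ Set.extremePoints ℝ (polyhedron u A),
        ∀ j, 0 < (∑ l, (u j l : ℝ) * v l) + (A j : ℝ) → y j ≠ 0 :=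
  statement2_general d k S c u a ha_le A hA hP

end
end

section
/- Consider the map φ defined for t = (t₁, t₂) ∈ (ℂˣ)² with (1+t₁)(1+t₂)(1+t₂+t₁t₂) ≠ 0 by φ(t₁,t₂) = ( t₁/(1+t₁), t₂(1+t₁)/(1+t₂+t₁t₂), (1+t₂+t₁t₂)/((1+t₁)(1+t₂)), (1+t₂)/(1+t₂+t₁t₂), 1/(1+t₂) ). Then the image of φ equals the set {y ∈ (ℂˣ)⁵ : y₃y₄ + y₁ = 1, y₅ + y₂y₃ = 1, y₄y₅ + y₂y₃y₄ + y₁y₂ = 1}. -/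
/-!
On the variety, the coordinates `a = y₀` and `e = y₄` determine the point: the three equations
force `y₂ = 1 - a e`, and then `y₁ y₂ = 1 - e` and `y₃ y₂ = 1 - a`. So the part of the variety
inside the torus is the graph of `point a e` over `{a, e ∉ {0, 1}, a e ≠ 1}`, and the chart is the
change of coordinates `a = t₁ / (1 + t₁)`, `e = 1 / (1 + t₂)`, a bijection of the parameter
domains with inverse `t₁ = a / (1 - a)`, `t₂ = (1 - e) / e`.
-/

namespace Pentagon

variable {K : Type*} [Field K]

def point (a e : K) : Fin 5 → K :=
  ![a, (1 - e) / (1 - a * e), 1 - a * e, (1 - a) / (1 - a * e), e]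

def chart (t₁ t₂ : K) : Fin 5 → K :=
  ![t₁ / (1 + t₁), t₂ * (1 + t₁) / (1 + t₂ + t₁ * t₂), (1 + t₂ + t₁ * t₂) / ((1 + t₁) * (1 + t₂)),
    (1 + t₂) / (1 + t₂ + t₁ * t₂), 1 / (1 + t₂)]

def IsAdmissible (a e : K) : Prop :=
  a ≠ 0 ∧ e ≠ 0 ∧ 1 - a ≠ 0 ∧ 1 - e ≠ 0 ∧ 1 - a * e ≠ 0

/-- Where `1 + t₂ + t₁ t₂ = 0`, also `1 - a e = 0`, and both sides take the junk value `x / 0 = 0`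
in the same coordinates. -/
theorem chart_eq_point {t₁ t₂ : K} (h₁ : 1 + t₁ ≠ 0) (h₂ : 1 + t₂ ≠ 0) :
    chart t₁ t₂ = point (t₁ / (1 + t₁)) (1 / (1 + t₂)) := by
  funext i
  fin_cases i <;> simp only [chart, point, Fin.zero_eta, Fin.mk_one, Fin.reduceFinMk,
    Matrix.cons_val_zero, Matrix.cons_val_one, Matrix.cons_val_two, Matrix.cons_val_three,
    Matrix.cons_val_four, Matrix.head_cons, Matrix.tail_cons] <;> field_simp <;> ring

theorem isAdmissible_chart_coords {t₁ t₂ : K} (ht₁ : t₁ ≠ 0) (ht₂ : t₂ ≠ 0) (h₁ : 1 + t₁ ≠ 0)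
    (h₂ : 1 + t₂ ≠ 0) (h₃ : 1 + t₂ + t₁ * t₂ ≠ 0) :
    IsAdmissible (t₁ / (1 + t₁)) (1 / (1 + t₂)) := by
  have ha : 1 - t₁ / (1 + t₁) = 1 / (1 + t₁) := by field_simp; ring
  have he : 1 - 1 / (1 + t₂) = t₂ / (1 + t₂) := by field_simp; ring
  have hae : 1 - t₁ / (1 + t₁) * (1 / (1 + t₂)) = (1 + t₂ + t₁ * t₂) / ((1 + t₁) * (1 + t₂)) := by
    field_simp; ring
  rw [IsAdmissible, ha, he, hae]
  exact ⟨div_ne_zero ht₁ h₁, one_div_ne_zero h₂, one_div_ne_zero h₁, div_ne_zero ht₂ h₂,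
    div_ne_zero h₃ (mul_ne_zero h₁ h₂)⟩

theorem chart_inverse_coords {a e : K} (h : IsAdmissible a e) :
    a / (1 - a) ≠ 0 ∧ (1 - e) / e ≠ 0 ∧
      (1 + a / (1 - a)) * (1 + (1 - e) / e) *
        (1 + (1 - e) / e + a / (1 - a) * ((1 - e) / e)) ≠ 0 ∧
      chart (a / (1 - a)) ((1 - e) / e) = point a e := by
  obtain ⟨ha, he, ha₁, he₁, hae⟩ := h
  have h₁ : 1 + a / (1 - a) = 1 / (1 - a) := by field_simp; ring
  have h₂ : 1 + (1 - e) / e = 1 / e := by field_simp; ring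
  have h₃ : 1 + (1 - e) / e + a / (1 - a) * ((1 - e) / e) = (1 - a * e) / ((1 - a) * e) := by
    field_simp; ring
  have h₁₀ : 1 + a / (1 - a) ≠ 0 := h₁ ▸ one_div_ne_zero ha₁
  have h₂₀ : 1 + (1 - e) / e ≠ 0 := h₂ ▸ one_div_ne_zero he
  have h₃₀ : 1 + (1 - e) / e + a / (1 - a) * ((1 - e) / e) ≠ 0 :=
    h₃ ▸ div_ne_zero hae (mul_ne_zero ha₁ he)
  refine ⟨div_ne_zero ha ha₁, div_ne_zero he₁ he, mul_ne_zero (mul_ne_zero h₁₀ h₂₀) h₃₀, ?_⟩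
  rw [chart_eq_point h₁₀ h₂₀, h₁, h₂]
  congr 1 <;> field_simp

theorem exists_chart_iff_exists_point {y : Fin 5 → K} :
    (∃ t₁ t₂ : K, t₁ ≠ 0 ∧ t₂ ≠ 0 ∧ (1 + t₁) * (1 + t₂) * (1 + t₂ + t₁ * t₂) ≠ 0 ∧
      y = chart t₁ t₂) ↔ ∃ a e, IsAdmissible a e ∧ y = point a e := by
  constructor
  · rintro ⟨t₁, t₂, ht₁, ht₂, hne, rfl⟩
    obtain ⟨⟨h₁, h₂⟩, h₃⟩ := by simpa only [mul_ne_zero_iff] using hne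
    exact ⟨_, _, isAdmissible_chart_coords ht₁ ht₂ h₁ h₂ h₃, chart_eq_point h₁ h₂⟩
  · rintro ⟨a, e, h, rfl⟩
    obtain ⟨ht₁, ht₂, hne, hchart⟩ := chart_inverse_coords h
    exact ⟨_, _, ht₁, ht₂, hne, hchart.symm⟩

theorem isAdmissible_and_eq_point {y : Fin 5 → K} (hne : ∀ j, y j ≠ 0)
    (h₁ : y 2 * y 3 + y 0 = 1) (h₂ : y 4 + y 1 * y 2 = 1)
    (h₃ : y 3 * y 4 + y 1 * y 2 * y 3 + y 0 * y 1 = 1) :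
    IsAdmissible (y 0) (y 4) ∧ y = point (y 0) (y 4) := by
  -- By `h₂`, `h₃` reads `y₃ + y₀ y₁ = 1`; multiply by `y₂` and use `h₁`, `h₂` again.
  have hc : y 2 = 1 - y 0 * y 4 := by
    linear_combination (-y 2) * h₃ + (y 2 * y 3 + y 0) * h₂ + h₁
  have hb : y 1 * y 2 = 1 - y 4 := by linear_combination h₂
  have hd : y 3 * y 2 = 1 - y 0 := by linear_combination h₁
  refine ⟨⟨hne 0, hne 4, hd ▸ mul_ne_zero (hne 3) (hne 2), hb ▸ mul_ne_zero (hne 1) (hne 2),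
    hc ▸ hne 2⟩, ?_⟩
  funext i
  fin_cases i <;> simp only [point, Fin.zero_eta, Fin.mk_one, Fin.reduceFinMk,
    Matrix.cons_val_zero, Matrix.cons_val_one, Matrix.cons_val_two, Matrix.cons_val_three,
    Matrix.cons_val_four, Matrix.head_cons, Matrix.tail_cons]
  · rw [← hb, ← hc, mul_div_cancel_right₀ _ (hne 2)]
  · exact hc
  · rw [← hd, ← hc, mul_div_cancel_right₀ _ (hne 2)]

theorem torusEquations_iff_exists_point {y : Fin 5 → K} :
    ((∀ j, y j ≠ 0) ∧ y 2 * y 3 + y 0 = 1 ∧ y 4 + y 1 * y 2 = 1 ∧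
      y 3 * y 4 + y 1 * y 2 * y 3 + y 0 * y 1 = 1) ↔ ∃ a e, IsAdmissible a e ∧ y = point a e := by
  constructor
  · rintro ⟨hne, h₁, h₂, h₃⟩
    exact ⟨_, _, isAdmissible_and_eq_point hne h₁ h₂ h₃⟩
  · rintro ⟨a, e, ⟨ha, he, ha₁, he₁, hae⟩, rfl⟩
    refine ⟨fun j => ?_, ?_, ?_, ?_⟩
    · fin_cases j <;> simp [point, *]
    all_goals
      simp only [point, Matrix.cons_val_zero, Matrix.cons_val_one, Matrix.cons_val_two,
        Matrix.cons_val_three, Matrix.cons_val_four, Matrix.head_cons, Matrix.tail_cons]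
    · rw [mul_div_cancel₀ _ hae]; ring
    · rw [div_mul_cancel₀ _ hae]; ring
    · rw [div_mul_cancel₀ _ hae]; field_simp; ring

end Pentagon

theorem statement12 :
    {y : Fin 5 → ℂ |
        ∃ t₁ t₂ : ℂ, t₁ ≠ 0 ∧ t₂ ≠ 0 ∧
          (1 + t₁) * (1 + t₂) * (1 + t₂ + t₁ * t₂) ≠ 0 ∧
          y = ![t₁ / (1 + t₁),
                t₂ * (1 + t₁) / (1 + t₂ + t₁ * t₂),
                (1 + t₂ + t₁ * t₂) / ((1 + t₁) * (1 + t₂)),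
                (1 + t₂) / (1 + t₂ + t₁ * t₂),
                1 / (1 + t₂)]} =
      {y : Fin 5 → ℂ |
        (∀ j, y j ≠ 0) ∧
        y 2 * y 3 + y 0 = 1 ∧
        y 4 + y 1 * y 2 = 1 ∧
        y 3 * y 4 + y 1 * y 2 * y 3 + y 0 * y 1 = 1} := by
  ext y
  exact Pentagon.exists_chart_iff_exists_point.trans
    Pentagon.torusEquations_iff_exists_point.symm
end

section
/- In the polynomial ring ℂ[y₁,…,y₆], the ideal generated by the four polynomials y₁y₄ + y₂y₃ − 1, y₂y₆ + y₄y₅ − 1, y₁y₄y₆ + y₂y₃y₆ + y₃y₄y₅ − 1, y₁y₆ + y₃y₅ − 1 is equal to the ideal generated by the six 'binary' polynomials y₁ + y₂y₃²y₅ − 1, y₂ + y₁y₄²y₅ − 1, y₃ + y₁y₄y₆ − 1, y₄ + y₂y₃y₆ − 1, y₅ + y₁y₂y₆² − 1, y₆ + y₃y₄y₅ − 1. -/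
/-!
Statement 14 (hexagon example, binary presentation): in `ℂ[y₁,…,y₆]`, the ideal
generated by the four hexagon `u`-equations equals the ideal generated by the six
"binary" polynomials.
-/

open MvPolynomial

noncomputable section

/-- The variables `y₁, …, y₆` of `ℂ[y₁,…,y₆]`. -/
abbrev y (i : Fin 6) : MvPolynomial (Fin 6) ℂ := X i

set_option maxHeartbeats 1000000 in
theorem statement14 :
    Ideal.span ({y 0 * y 3 + y 1 * y 2 - 1,
                 y 1 * y 5 + y 3 * y 4 - 1,
                 y 0 * y 3 * y 5 + y 1 * y 2 * y 5 + y 2 * y 3 * y 4 - 1,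
                 y 0 * y 5 + y 2 * y 4 - 1} : Set (MvPolynomial (Fin 6) ℂ)) =
      Ideal.span ({y 0 + y 1 * y 2 ^ 2 * y 4 - 1,
                   y 1 + y 0 * y 3 ^ 2 * y 4 - 1,
                   y 2 + y 0 * y 3 * y 5 - 1,
                   y 3 + y 1 * y 2 * y 5 - 1,
                   y 4 + y 0 * y 1 * y 5 ^ 2 - 1,
                   y 5 + y 2 * y 3 * y 4 - 1} : Set (MvPolynomial (Fin 6) ℂ)) := by
  set J := Ideal.span ({y 0 + y 1 * y 2 ^ 2 * y 4 - 1,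
                   y 1 + y 0 * y 3 ^ 2 * y 4 - 1,
                   y 2 + y 0 * y 3 * y 5 - 1,
                   y 3 + y 1 * y 2 * y 5 - 1,
                   y 4 + y 0 * y 1 * y 5 ^ 2 - 1,
                   y 5 + y 2 * y 3 * y 4 - 1} : Set (MvPolynomial (Fin 6) ℂ)) with hJ
  set I := Ideal.span ({y 0 * y 3 + y 1 * y 2 - 1,
                 y 1 * y 5 + y 3 * y 4 - 1,
                 y 0 * y 3 * y 5 + y 1 * y 2 * y 5 + y 2 * y 3 * y 4 - 1,
                 y 0 * y 5 + y 2 * y 4 - 1} : Set (MvPolynomial (Fin 6) ℂ)) with hI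
  have hg1 : (y 0 + y 1 * y 2 ^ 2 * y 4 - 1) ∈ J := Ideal.subset_span (by simp)
  have hg2 : (y 1 + y 0 * y 3 ^ 2 * y 4 - 1) ∈ J := Ideal.subset_span (by simp)
  have hg3 : (y 2 + y 0 * y 3 * y 5 - 1) ∈ J := Ideal.subset_span (by simp)
  have hg4 : (y 3 + y 1 * y 2 * y 5 - 1) ∈ J := Ideal.subset_span (by simp)
  have hg5 : (y 4 + y 0 * y 1 * y 5 ^ 2 - 1) ∈ J := Ideal.subset_span (by simp)
  have hg6 : (y 5 + y 2 * y 3 * y 4 - 1) ∈ J := Ideal.subset_span (by simp)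
  have ha' : (y 0 * y 3 + y 1 * y 2 - 1) ∈ I := Ideal.subset_span (by simp)
  have hb' : (y 1 * y 5 + y 3 * y 4 - 1) ∈ I := Ideal.subset_span (by simp)
  have hc' : (y 0 * y 3 * y 5 + y 1 * y 2 * y 5 + y 2 * y 3 * y 4 - 1) ∈ I :=
    Ideal.subset_span (by simp)
  have hd' : (y 0 * y 5 + y 2 * y 4 - 1) ∈ I := Ideal.subset_span (by simp)
  -- the four quadric generators lie in J
  have ha : (y 0 * y 3 + y 1 * y 2 - 1) ∈ J := by
    have h : y 0 * y 3 + y 1 * y 2 - 1 =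
        (1 - y 0 * y 3 * y 5) * (y 1 + y 0 * y 3 ^ 2 * y 4 - 1) +
        (y 1 + y 0 * y 3 ^ 2 * y 4) * (y 2 + y 0 * y 3 * y 5 - 1) +
        (-(y 0 * y 3)) * (y 5 + y 2 * y 3 * y 4 - 1) := by ring
    rw [h]
    exact Ideal.add_mem _ (Ideal.add_mem _ (Ideal.mul_mem_left _ _ hg2)
      (Ideal.mul_mem_left _ _ hg3)) (Ideal.mul_mem_left _ _ hg6)
  have hb : (y 1 * y 5 + y 3 * y 4 - 1) ∈ J := by
    have h : y 1 * y 5 + y 3 * y 4 - 1 =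
        y 5 * (y 1 + y 0 * y 3 ^ 2 * y 4 - 1) +
        (-(y 3 * y 4)) * (y 2 + y 0 * y 3 * y 5 - 1) +
        1 * (y 5 + y 2 * y 3 * y 4 - 1) := by ring
    rw [h]
    exact Ideal.add_mem _ (Ideal.add_mem _ (Ideal.mul_mem_left _ _ hg2)
      (Ideal.mul_mem_left _ _ hg3)) (Ideal.mul_mem_left _ _ hg6)
  have hc : (y 0 * y 3 * y 5 + y 1 * y 2 * y 5 + y 2 * y 3 * y 4 - 1) ∈ J := by
    have h : y 0 * y 3 * y 5 + y 1 * y 2 * y 5 + y 2 * y 3 * y 4 - 1 =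
        y 5 * (y 0 * y 3 + y 1 * y 2 - 1) + 1 * (y 5 + y 2 * y 3 * y 4 - 1) := by ring
    rw [h]
    exact Ideal.add_mem _ (Ideal.mul_mem_left _ _ ha) (Ideal.mul_mem_left _ _ hg6)
  have hd : (y 0 * y 5 + y 2 * y 4 - 1) ∈ J := by
    have h : y 0 * y 5 + y 2 * y 4 - 1 =
        y 5 * (y 0 + y 1 * y 2 ^ 2 * y 4 - 1) +
        (-(y 2 * y 4)) * (y 3 + y 1 * y 2 * y 5 - 1) +
        1 * (y 5 + y 2 * y 3 * y 4 - 1) := by ring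
    rw [h]
    exact Ideal.add_mem _ (Ideal.add_mem _ (Ideal.mul_mem_left _ _ hg1)
      (Ideal.mul_mem_left _ _ hg4)) (Ideal.mul_mem_left _ _ hg6)
  -- the six binary generators lie in I
  have hG1 : (y 0 + y 1 * y 2 ^ 2 * y 4 - 1) ∈ I := by
    have h : y 0 + y 1 * y 2 ^ 2 * y 4 - 1 =
        1 * (y 0 * y 3 + y 1 * y 2 - 1) +
        (-(y 0)) * (y 0 * y 3 * y 5 + y 1 * y 2 * y 5 + y 2 * y 3 * y 4 - 1) +
        (y 0 * y 3 + y 1 * y 2) * (y 0 * y 5 + y 2 * y 4 - 1) := by ring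
    rw [h]
    exact Ideal.add_mem _ (Ideal.add_mem _ (Ideal.mul_mem_left _ _ ha')
      (Ideal.mul_mem_left _ _ hc')) (Ideal.mul_mem_left _ _ hd')
  have hG2 : (y 1 + y 0 * y 3 ^ 2 * y 4 - 1) ∈ I := by
    have h : y 1 + y 0 * y 3 ^ 2 * y 4 - 1 =
        1 * (y 0 * y 3 + y 1 * y 2 - 1) +
        (-(y 1)) * (y 0 * y 3 * y 5 + y 1 * y 2 * y 5 + y 2 * y 3 * y 4 - 1) +
        (y 0 * y 3 + y 1 * y 2) * (y 1 * y 5 + y 3 * y 4 - 1) := by ring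
    rw [h]
    exact Ideal.add_mem _ (Ideal.add_mem _ (Ideal.mul_mem_left _ _ ha')
      (Ideal.mul_mem_left _ _ hc')) (Ideal.mul_mem_left _ _ hb')
  have hG3 : (y 2 + y 0 * y 3 * y 5 - 1) ∈ I := by
    have h : y 2 + y 0 * y 3 * y 5 - 1 =
        1 * (y 0 * y 3 * y 5 + y 1 * y 2 * y 5 + y 2 * y 3 * y 4 - 1) +
        (-(y 2)) * (y 1 * y 5 + y 3 * y 4 - 1) := by ring
    rw [h]
    exact Ideal.add_mem _ (Ideal.mul_mem_left _ _ hc') (Ideal.mul_mem_left _ _ hb')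
  have hG4 : (y 3 + y 1 * y 2 * y 5 - 1) ∈ I := by
    have h : y 3 + y 1 * y 2 * y 5 - 1 =
        1 * (y 0 * y 3 * y 5 + y 1 * y 2 * y 5 + y 2 * y 3 * y 4 - 1) +
        (-(y 3)) * (y 0 * y 5 + y 2 * y 4 - 1) := by ring
    rw [h]
    exact Ideal.add_mem _ (Ideal.mul_mem_left _ _ hc') (Ideal.mul_mem_left _ _ hd')
  have hG5 : (y 4 + y 0 * y 1 * y 5 ^ 2 - 1) ∈ I := by
    have h : y 4 + y 0 * y 1 * y 5 ^ 2 - 1 =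
        1 * (y 1 * y 5 + y 3 * y 4 - 1) +
        (-(y 4)) * (y 0 * y 3 * y 5 + y 1 * y 2 * y 5 + y 2 * y 3 * y 4 - 1) +
        (y 1 * y 5 + y 3 * y 4) * (y 0 * y 5 + y 2 * y 4 - 1) := by ring
    rw [h]
    exact Ideal.add_mem _ (Ideal.add_mem _ (Ideal.mul_mem_left _ _ hb')
      (Ideal.mul_mem_left _ _ hc')) (Ideal.mul_mem_left _ _ hd')
  have hG6 : (y 5 + y 2 * y 3 * y 4 - 1) ∈ I := by
    have h : y 5 + y 2 * y 3 * y 4 - 1 =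
        1 * (y 0 * y 3 * y 5 + y 1 * y 2 * y 5 + y 2 * y 3 * y 4 - 1) +
        (-(y 5)) * (y 0 * y 3 + y 1 * y 2 - 1) := by ring
    rw [h]
    exact Ideal.add_mem _ (Ideal.mul_mem_left _ _ hc') (Ideal.mul_mem_left _ _ ha')
  apply le_antisymm
  · rw [hI, Ideal.span_le]
    rintro p hp
    simp only [Set.mem_insert_iff, Set.mem_singleton_iff] at hp
    rcases hp with rfl | rfl | rfl | rfl
    exacts [ha, hb, hc, hd]
  · rw [hJ, Ideal.span_le]
    rintro p hp
    simp only [Set.mem_insert_iff, Set.mem_singleton_iff] at hp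
    rcases hp with rfl | rfl | rfl | rfl | rfl | rfl
    exacts [hG1, hG2, hG3, hG4, hG5, hG6]

end
end
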